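/- Let u, v, w be vectors in a real inner product space with w ≠ 0, ‖u‖ ≤ M, ‖v‖ ≤ M. Suppose σ(⟨w, u⟩) = σ(⟨w, v⟩) = p where σ(z) = 1/(1+exp(-z)) and 0 < p < 1. Then ‖u - v‖² ≤ 4M² - (4/‖w‖²)·(log((1-p)/p))². -/

import Mathlib

/-!
Both feature vectors have the same logit `⟪w, u⟫ = ⟪w, v⟫ = -log ((1 - p) / p)`, so by
Cauchy–Schwarz `‖u + v‖ ≥ 2 |log ((1 - p) / p)| / ‖w‖`; the parallelogram law
`‖u - v‖² + ‖u + v‖² = 2‖u‖² + 2‖v‖² ≤ 4M²` then bounds `‖u - v‖`.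
-/

open RealInnerProductSpace

theorem Real.log_one_sub_div_sigmoid (z : ℝ) :
    Real.log ((1 - 1 / (1 + Real.exp (-z))) / (1 / (1 + Real.exp (-z)))) = -z := by
  have hpos : 0 < 1 + Real.exp (-z) := by positivity
  have hodds : (1 - 1 / (1 + Real.exp (-z))) / (1 / (1 + Real.exp (-z))) = Real.exp (-z) := by
    field_simp
    ring
  rw [hodds, Real.log_exp]

section InnerProductSpace

variable {E : Type*} [NormedAddCommGroup E] [InnerProductSpace ℝ E]

theorem real_inner_sq_div_norm_sq_le (w x : E) : ⟪w, x⟫ ^ 2 / ‖w‖ ^ 2 ≤ ‖x‖ ^ 2 := by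
  have hcs : ⟪w, x⟫ ^ 2 ≤ ‖x‖ ^ 2 * ‖w‖ ^ 2 := by
    rw [← sq_abs, ← mul_pow, mul_comm]
    exact pow_le_pow_left₀ (abs_nonneg _) (abs_real_inner_le_norm w x) 2
  exact div_le_of_le_mul₀ (by positivity) (by positivity) hcs

theorem norm_sub_sq_le_of_inner_eq {u v : E} (w : E) {M : ℝ} (hu : ‖u‖ ≤ M) (hv : ‖v‖ ≤ M)
    (huv : ⟪w, u⟫ = ⟪w, v⟫) : ‖u - v‖ ^ 2 ≤ 4 * M ^ 2 - 4 / ‖w‖ ^ 2 * ⟪w, u⟫ ^ 2 := by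
  have hsum : ⟪w, u + v⟫ = 2 * ⟪w, u⟫ := by rw [inner_add_right, ← huv]; ring
  have hproj : 4 / ‖w‖ ^ 2 * ⟪w, u⟫ ^ 2 ≤ ‖u + v‖ ^ 2 := by
    have := real_inner_sq_div_norm_sq_le w (u + v)
    rw [hsum] at this
    linarith [show (2 * ⟪w, u⟫) ^ 2 / ‖w‖ ^ 2 = 4 / ‖w‖ ^ 2 * ⟪w, u⟫ ^ 2 by ring]
  have hpar : ‖u + v‖ ^ 2 + ‖u - v‖ ^ 2 = 2 * (‖u‖ ^ 2 + ‖v‖ ^ 2) := by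
    simpa only [← sq] using parallelogram_law_with_norm ℝ u v
  have hu2 : ‖u‖ ^ 2 ≤ M ^ 2 := pow_le_pow_left₀ (norm_nonneg u) hu 2
  have hv2 : ‖v‖ ^ 2 ≤ M ^ 2 := pow_le_pow_left₀ (norm_nonneg v) hv 2
  linarith

end InnerProductSpace

open RealInnerProductSpace in
theorem stmt_7_general {E : Type*} [NormedAddCommGroup E] [InnerProductSpace ℝ E]
    (σ : ℝ → ℝ) (hσ : ∀ z, σ z = 1 / (1 + Real.exp (-z)))
    (u v w : E) (M p : ℝ)
    (hu : ‖u‖ ≤ M) (hv : ‖v‖ ≤ M)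
    (hpu : σ ⟪w, u⟫ = p) (hpv : σ ⟪w, v⟫ = p) :
    ‖u - v‖ ^ 2 ≤ 4 * M ^ 2 - 4 / ‖w‖ ^ 2 * (Real.log ((1 - p) / p)) ^ 2 := by
  have hlogit : ∀ x : E, σ ⟪w, x⟫ = p → Real.log ((1 - p) / p) = -⟪w, x⟫ := by
    rintro x rfl
    rw [hσ, Real.log_one_sub_div_sigmoid]
  have huv : ⟪w, u⟫ = ⟪w, v⟫ := by linarith [hlogit u hpu, hlogit v hpv]
  rw [hlogit u hpu, neg_sq]
  exact norm_sub_sq_le_of_inner_eq w hu hv huv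

open RealInnerProductSpace in
theorem stmt_7 {E : Type*} [NormedAddCommGroup E] [InnerProductSpace ℝ E]
    (σ : ℝ → ℝ) (hσ : ∀ z, σ z = 1 / (1 + Real.exp (-z)))
    (u v w : E) (M p : ℝ) (hM : 0 ≤ M) (hw : w ≠ 0)
    (hu : ‖u‖ ≤ M) (hv : ‖v‖ ≤ M)
    (hp : 0 < p) (hp1 : p < 1)
    (hpu : σ ⟪w, u⟫ = p) (hpv : σ ⟪w, v⟫ = p) :
    ‖u - v‖ ^ 2 ≤ 4 * M ^ 2 - 4 / ‖w‖ ^ 2 * (Real.log ((1 - p) / p)) ^ 2 :=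
  stmt_7_general σ hσ u v w M p hu hv hpu hpv
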